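/- arXiv:1212.4846 — 7 statements merged into one kernel-verified Lean document; each statement's English description precedes it below -/
import Mathlib

section
/- Let S₁ and S₂ be finite nonempty state spaces. Let A₁, P₁, B₁ : Matrix S₁ S₁ ℝ and A₂, P₂, B₂ : Matrix S₂ S₂ ℝ have nonnegative entries, where each row of P₁ and each row of P₂ contains exactly one entry equal to 1 and all other entries equal to 0 (unique passive transition per state). Let κ_a, κ_c be positive reals. Define the closed rate matrices R₁ = A₁ + κ_c • P₁ + B₁ and R₂ = A₂ + κ_a • P₂ + B₂, and the closed generators Q₁ = R₁ − Matrix.diagonal (fun s => ∑ s', R₁ s s') and Q₂ = R₂ − Matrix.diagonal (fun s => ∑ s', R₂ s s'). Suppose π₁ : S₁ → ℝ and π₂ : S₂ → ℝ have strictly positive entries and satisfy π₁ ᵥ* Q₁ = 0, π₂ ᵥ* Q₂ = 0, together with the constant reversed-rate conditions π₁ ᵥ* A₁ = κ_a • π₁ and π₂ ᵥ* A₂ = κ_c • π₂. Define the joint rate matrix on S₁ × S₂ by R = B₁ ⊗ₖ 1 + 1 ⊗ₖ B₂ + A₁ ⊗ₖ P₂ + P₁ ⊗ₖ A₂ (Kronecker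 products, 1 the identity matrix) and the joint generator Q = R − Matrix.diagonal (fun s => ∑ s', R s s'). Then the Kronecker product measure π(s₁, s₂) = π₁ s₁ * π₂ s₂ satisfies π ᵥ* Q = 0, i.e. π is an invariant measure of the cooperating process. -/
open Matrix
open scoped Kronecker

/-- Theorem 1 (GRCAT), part 1, for two cooperating components: the Kronecker
product of the invariant measures of the closed components is an invariant
measure of the cooperating process. -/
theorem product_form_two_components
    {S₁ S₂ : Type*} [Fintype S₁] [Fintype S₂] [Nonempty S₁] [Nonempty S₂]
    [DecidableEq S₁] [DecidableEq S₂]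
    (A₁ P₁ B₁ : Matrix S₁ S₁ ℝ) (A₂ P₂ B₂ : Matrix S₂ S₂ ℝ)
    (hA₁ : ∀ i j, 0 ≤ A₁ i j) (hP₁ : ∀ i j, 0 ≤ P₁ i j) (hB₁ : ∀ i j, 0 ≤ B₁ i j)
    (hA₂ : ∀ i j, 0 ≤ A₂ i j) (hP₂ : ∀ i j, 0 ≤ P₂ i j) (hB₂ : ∀ i j, 0 ≤ B₂ i j)
    (hP₁row : ∀ i, ∃ j, P₁ i j = 1 ∧ ∀ k, k ≠ j → P₁ i k = 0)
    (hP₂row : ∀ i, ∃ j, P₂ i j = 1 ∧ ∀ k, k ≠ j → P₂ i k = 0)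
    (κa κc : ℝ) (hκa : 0 < κa) (hκc : 0 < κc)
    (π₁ : S₁ → ℝ) (π₂ : S₂ → ℝ)
    (hπ₁pos : ∀ s, 0 < π₁ s) (hπ₂pos : ∀ s, 0 < π₂ s)
    (hπ₁ : π₁ ᵥ* (A₁ + κc • P₁ + B₁
        - Matrix.diagonal fun s => ∑ s', (A₁ + κc • P₁ + B₁) s s') = 0)
    (hπ₂ : π₂ ᵥ* (A₂ + κa • P₂ + B₂
        - Matrix.diagonal fun s => ∑ s', (A₂ + κa • P₂ + B₂) s s') = 0)
    (hrev₁ : π₁ ᵥ* A₁ = κa • π₁)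
    (hrev₂ : π₂ ᵥ* A₂ = κc • π₂) :
    (fun p : S₁ × S₂ => π₁ p.1 * π₂ p.2) ᵥ*
      ((B₁ ⊗ₖ (1 : Matrix S₂ S₂ ℝ) + (1 : Matrix S₁ S₁ ℝ) ⊗ₖ B₂ + A₁ ⊗ₖ P₂ + P₁ ⊗ₖ A₂)
        - Matrix.diagonal fun s => ∑ s',
            (B₁ ⊗ₖ (1 : Matrix S₂ S₂ ℝ) + (1 : Matrix S₁ S₁ ℝ) ⊗ₖ B₂
              + A₁ ⊗ₖ P₂ + P₁ ⊗ₖ A₂) s s') = 0 := by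
  have sP₁ : ∀ i, ∑ j, P₁ i j = 1 := by
    intro i
    obtain ⟨j, hj1, hj0⟩ := hP₁row i
    rw [Finset.sum_eq_single j (fun k _ hk => hj0 k hk) (fun h => absurd (Finset.mem_univ j) h)]
    exact hj1
  have sP₂ : ∀ i, ∑ j, P₂ i j = 1 := by
    intro i
    obtain ⟨j, hj1, hj0⟩ := hP₂row i
    rw [Finset.sum_eq_single j (fun k _ hk => hj0 k hk) (fun h => absurd (Finset.mem_univ j) h)]
    exact hj1
  funext p
  obtain ⟨j₁, j₂⟩ := p
  have e₁ := congrFun hπ₁ j₁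
  have e₂ := congrFun hπ₂ j₂
  have r₁ := congrFun hrev₁ j₁
  have r₂ := congrFun hrev₂ j₂
  simp only [vecMul, dotProduct, Matrix.sub_apply, Matrix.add_apply, Matrix.smul_apply,
    Matrix.diagonal_apply, smul_eq_mul, Pi.zero_apply, Pi.smul_apply, mul_ite, mul_zero,
    mul_one, mul_sub, mul_add, Finset.sum_sub_distrib, Finset.sum_add_distrib,
    Finset.sum_ite_eq', Finset.mem_univ, if_true, ← Finset.mul_sum, sP₁, sP₂] at e₁ e₂ r₁ r₂
  simp only [vecMul, dotProduct, Matrix.sub_apply, Matrix.add_apply,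
    Matrix.kroneckerMap_apply, Matrix.one_apply, Matrix.diagonal_apply,
    Fintype.sum_prod_type, Prod.mk.injEq, Pi.zero_apply, ite_and, mul_ite, mul_zero,
    mul_one, ite_mul, zero_mul, one_mul, mul_sub, mul_add, Finset.sum_sub_distrib,
    Finset.sum_add_distrib, Finset.sum_ite_eq', Finset.mem_univ, if_true,
    ← Finset.mul_sum, ← Finset.sum_mul, sP₁, sP₂]
  have t1 : ∑ x : S₁, π₁ x * π₂ j₂ * B₁ x j₁ = π₂ j₂ * ∑ x : S₁, π₁ x * B₁ x j₁ := by
    rw [Finset.mul_sum]; exact Finset.sum_congr rfl fun x _ => by ring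
  have t2 : ∑ x : S₁, ∑ y : S₂, (if x = j₁ then π₁ x * π₂ y * B₂ y j₂ else 0)
      = π₁ j₁ * ∑ y : S₂, π₂ y * B₂ y j₂ := by
    rw [Finset.sum_comm]
    simp only [Finset.sum_ite_eq', Finset.mem_univ, if_true, Finset.mul_sum]
    exact Finset.sum_congr rfl fun y _ => by ring
  have t3 : ∑ x : S₁, ∑ y : S₂, π₁ x * π₂ y * (A₁ x j₁ * P₂ y j₂)
      = (∑ x : S₁, π₁ x * A₁ x j₁) * (∑ y : S₂, π₂ y * P₂ y j₂) := by
    rw [Finset.sum_mul_sum]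
    exact Finset.sum_congr rfl fun x _ => Finset.sum_congr rfl fun y _ => by ring
  have t4 : ∑ x : S₁, ∑ y : S₂, π₁ x * π₂ y * (P₁ x j₁ * A₂ y j₂)
      = (∑ x : S₁, π₁ x * P₁ x j₁) * (∑ y : S₂, π₂ y * A₂ y j₂) := by
    rw [Finset.sum_mul_sum]
    exact Finset.sum_congr rfl fun x _ => Finset.sum_congr rfl fun y _ => by ring
  have t5 : ∑ x : S₁, ∑ y : S₂, (if j₂ = y then B₁ j₁ x else 0) = ∑ x : S₁, B₁ j₁ x := by
    simp [Finset.sum_ite_eq]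
  have t6 : ∑ x : S₁, ∑ y : S₂, (if j₁ = x then B₂ j₂ y else 0) = ∑ y : S₂, B₂ j₂ y := by
    rw [Finset.sum_comm]
    simp [Finset.sum_ite_eq]
  have u1 : ∑ x : S₁, π₁ x * (κc * P₁ x j₁) = κc * ∑ x : S₁, π₁ x * P₁ x j₁ := by
    rw [Finset.mul_sum]; exact Finset.sum_congr rfl fun x _ => by ring
  have u2 : ∑ y : S₂, π₂ y * (κa * P₂ y j₂) = κa * ∑ y : S₂, π₂ y * P₂ y j₂ := by
    rw [Finset.mul_sum]; exact Finset.sum_congr rfl fun y _ => by ring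
  rw [u1] at e₁
  rw [u2] at e₂
  rw [t1, t2, t3, t4, t5, t6]
  linear_combination π₂ j₂ * e₁ + π₁ j₁ * e₂ + ((∑ y : S₂, π₂ y * P₂ y j₂) - π₂ j₂) * r₁
    + ((∑ x : S₁, π₁ x * P₁ x j₁) - π₁ j₁) * r₂
end

section
/- Under the hypotheses of the two-component product-form theorem (finite S₁, S₂; nonnegative A₁, P₁, B₁, A₂, P₂, B₂ with P₁, P₂ having exactly one entry 1 per row; κ_a, κ_c > 0; positive π₁, π₂ with π₁ ᵥ* Q₁ = 0, π₂ ᵥ* Q₂ = 0, π₁ ᵥ* A₁ = κ_a • π₁, π₂ ᵥ* A₂ = κ_c • π₂, where Q₁, Q₂ are the closed generators and Q is the joint generator built from R = B₁ ⊗ₖ 1 + 1 ⊗ₖ B₂ + A₁ ⊗ₖ P₂ + P₁ ⊗ₖ A₂ by subtracting the diagonal of row sums), suppose additionally that ∑_{s∈S₁} π₁ s = 1 and ∑_{s∈S₂} π₂ s = 1. Then the product vector π(s₁, s₂) = π₁ s₁ * π₂ s₂ satisfies ∑_{(s₁,s₂)∈S₁×S₂} π(s₁,s₂) = 1 and π ᵥ*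 Q = 0; that is, π is the steady-state probability distribution of the cooperating process. -/
open Matrix
open scoped Kronecker

private lemma prod_vecMul_kron {S₁ S₂ : Type*} [Fintype S₁] [Fintype S₂]
    (π₁ : S₁ → ℝ) (π₂ : S₂ → ℝ) (M : Matrix S₁ S₁ ℝ) (N : Matrix S₂ S₂ ℝ) (t : S₁ × S₂) :
    ((fun p : S₁ × S₂ => π₁ p.1 * π₂ p.2) ᵥ* (M ⊗ₖ N)) t
      = (π₁ ᵥ* M) t.1 * (π₂ ᵥ* N) t.2 := by
  simp only [Matrix.vecMul, dotProduct, Matrix.kroneckerMap_apply,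
    Fintype.sum_prod_type]
  rw [Finset.sum_mul_sum]
  exact Finset.sum_congr rfl fun s₁ _ => Finset.sum_congr rfl fun s₂ _ => by ring

private lemma rowsum_one {S : Type*} [Fintype S] (P : Matrix S S ℝ)
    (hProw : ∀ i, ∃ j, P i j = 1 ∧ ∀ k, k ≠ j → P i k = 0) (i : S) :
    ∑ j, P i j = 1 := by
  obtain ⟨j, hj1, hj0⟩ := hProw i
  rw [Finset.sum_eq_single j (fun k _ hk => hj0 k hk) (by simp), hj1]

/-- Theorem 1 (GRCAT), part 2, for two cooperating components: if moreover the
invariant measures of the closed components are probability distributions, then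
their Kronecker product is the steady-state probability distribution of the
cooperating process (it sums to 1 and is invariant for the joint generator). -/
theorem product_form_two_components_steady_state
    {S₁ S₂ : Type*} [Fintype S₁] [Fintype S₂] [Nonempty S₁] [Nonempty S₂]
    [DecidableEq S₁] [DecidableEq S₂]
    (A₁ P₁ B₁ : Matrix S₁ S₁ ℝ) (A₂ P₂ B₂ : Matrix S₂ S₂ ℝ)
    (hA₁ : ∀ i j, 0 ≤ A₁ i j) (hP₁ : ∀ i j, 0 ≤ P₁ i j) (hB₁ : ∀ i j, 0 ≤ B₁ i j)
    (hA₂ : ∀ i j, 0 ≤ A₂ i j) (hP₂ : ∀ i j, 0 ≤ P₂ i j) (hB₂ : ∀ i j, 0 ≤ B₂ i j)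
    (hP₁row : ∀ i, ∃ j, P₁ i j = 1 ∧ ∀ k, k ≠ j → P₁ i k = 0)
    (hP₂row : ∀ i, ∃ j, P₂ i j = 1 ∧ ∀ k, k ≠ j → P₂ i k = 0)
    (κa κc : ℝ) (hκa : 0 < κa) (hκc : 0 < κc)
    (π₁ : S₁ → ℝ) (π₂ : S₂ → ℝ)
    (hπ₁pos : ∀ s, 0 < π₁ s) (hπ₂pos : ∀ s, 0 < π₂ s)
    (hπ₁ : π₁ ᵥ* (A₁ + κc • P₁ + B₁
        - Matrix.diagonal fun s => ∑ s', (A₁ + κc • P₁ + B₁) s s') = 0)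
    (hπ₂ : π₂ ᵥ* (A₂ + κa • P₂ + B₂
        - Matrix.diagonal fun s => ∑ s', (A₂ + κa • P₂ + B₂) s s') = 0)
    (hrev₁ : π₁ ᵥ* A₁ = κa • π₁)
    (hrev₂ : π₂ ᵥ* A₂ = κc • π₂)
    (hsum₁ : ∑ s, π₁ s = 1) (hsum₂ : ∑ s, π₂ s = 1) :
    (∑ p : S₁ × S₂, π₁ p.1 * π₂ p.2 = 1) ∧
    (fun p : S₁ × S₂ => π₁ p.1 * π₂ p.2) ᵥ*
      ((B₁ ⊗ₖ (1 : Matrix S₂ S₂ ℝ) + (1 : Matrix S₁ S₁ ℝ) ⊗ₖ B₂ + A₁ ⊗ₖ P₂ + P₁ ⊗ₖ A₂)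
        - Matrix.diagonal fun s => ∑ s',
            (B₁ ⊗ₖ (1 : Matrix S₂ S₂ ℝ) + (1 : Matrix S₁ S₁ ℝ) ⊗ₖ B₂
              + A₁ ⊗ₖ P₂ + P₁ ⊗ₖ A₂) s s') = 0 := by
  have hP1 := rowsum_one P₁ hP₁row
  have hP2 := rowsum_one P₂ hP₂row
  constructor
  · rw [Fintype.sum_prod_type]
    simp only [← Finset.mul_sum, hsum₂, mul_one]
    exact hsum₁
  · funext t
    obtain ⟨t₁, t₂⟩ := t
    -- scalar balance equations from the closed components
    have e₁ : κa * π₁ t₁ + κc * (π₁ ᵥ* P₁) t₁ + (π₁ ᵥ* B₁) t₁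
        = π₁ t₁ * ((∑ s', A₁ t₁ s') + κc + (∑ s', B₁ t₁ s')) := by
      have h := congrFun hπ₁ t₁
      rw [Matrix.vecMul_sub, Matrix.vecMul_add, Matrix.vecMul_add] at h
      simp only [Pi.sub_apply, Pi.add_apply, Matrix.vecMul_diagonal, Pi.zero_apply] at h
      have hA : (π₁ ᵥ* A₁) t₁ = κa * π₁ t₁ := by rw [hrev₁]; simp
      have hsc : (π₁ ᵥ* (κc • P₁)) t₁ = κc * (π₁ ᵥ* P₁) t₁ := by
        simp only [Matrix.vecMul, dotProduct, Matrix.smul_apply, smul_eq_mul,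
          Finset.mul_sum]
        exact Finset.sum_congr rfl fun s _ => by ring
      have hrow : (∑ s', (A₁ + κc • P₁ + B₁) t₁ s')
          = (∑ s', A₁ t₁ s') + κc + (∑ s', B₁ t₁ s') := by
        simp [Matrix.add_apply, Matrix.smul_apply, smul_eq_mul, Finset.sum_add_distrib,
          ← Finset.mul_sum, hP1 t₁]
      rw [hA, hsc, hrow] at h
      linarith
    have e₂ : κc * π₂ t₂ + κa * (π₂ ᵥ* P₂) t₂ + (π₂ ᵥ* B₂) t₂
        = π₂ t₂ * ((∑ s', A₂ t₂ s') + κa + (∑ s', B₂ t₂ s')) := by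
      have h := congrFun hπ₂ t₂
      rw [Matrix.vecMul_sub, Matrix.vecMul_add, Matrix.vecMul_add] at h
      simp only [Pi.sub_apply, Pi.add_apply, Matrix.vecMul_diagonal, Pi.zero_apply] at h
      have hA : (π₂ ᵥ* A₂) t₂ = κc * π₂ t₂ := by rw [hrev₂]; simp
      have hsc : (π₂ ᵥ* (κa • P₂)) t₂ = κa * (π₂ ᵥ* P₂) t₂ := by
        simp only [Matrix.vecMul, dotProduct, Matrix.smul_apply, smul_eq_mul,
          Finset.mul_sum]
        exact Finset.sum_congr rfl fun s _ => by ring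
      have hrow : (∑ s', (A₂ + κa • P₂ + B₂) t₂ s')
          = (∑ s', A₂ t₂ s') + κa + (∑ s', B₂ t₂ s') := by
        simp [Matrix.add_apply, Matrix.smul_apply, smul_eq_mul, Finset.sum_add_distrib,
          ← Finset.mul_sum, hP2 t₂]
      rw [hA, hsc, hrow] at h
      linarith
    -- the row sum of the joint rate matrix
    have hD : (∑ s' : S₁ × S₂,
        (B₁ ⊗ₖ (1 : Matrix S₂ S₂ ℝ) + (1 : Matrix S₁ S₁ ℝ) ⊗ₖ B₂
          + A₁ ⊗ₖ P₂ + P₁ ⊗ₖ A₂) (t₁, t₂) s')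
        = (∑ s', B₁ t₁ s') + (∑ s', B₂ t₂ s')
          + (∑ s', A₁ t₁ s') + (∑ s', A₂ t₂ s') := by
      simp only [Matrix.add_apply, Matrix.kroneckerMap_apply, Fintype.sum_prod_type,
        Finset.sum_add_distrib, Matrix.one_apply]
      simp [mul_ite, ite_mul, mul_one, mul_zero, one_mul, zero_mul,
        Finset.sum_ite_eq, hP1 t₁, hP2 t₂]
      rw [← Finset.sum_mul_sum, ← Finset.sum_mul_sum, hP1 t₁, hP2 t₂, mul_one, one_mul]
    -- evaluate the joint equation at (t₁, t₂)
    rw [Matrix.vecMul_sub, Matrix.vecMul_add, Matrix.vecMul_add, Matrix.vecMul_add]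
    simp only [Pi.sub_apply, Pi.add_apply, Matrix.vecMul_diagonal, Pi.zero_apply,
      prod_vecMul_kron, hD]
    have hone₁ : (π₁ ᵥ* (1 : Matrix S₁ S₁ ℝ)) t₁ = π₁ t₁ := by simp
    have hone₂ : (π₂ ᵥ* (1 : Matrix S₂ S₂ ℝ)) t₂ = π₂ t₂ := by simp
    have hA1 : (π₁ ᵥ* A₁) t₁ = κa * π₁ t₁ := by rw [hrev₁]; simp
    have hA2 : (π₂ ᵥ* A₂) t₂ = κc * π₂ t₂ := by rw [hrev₂]; simp
    rw [hone₁, hone₂, hA1, hA2]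
    linear_combination (π₂ t₂) * e₁ + (π₁ t₁) * e₂
end

section
/- Let ι be a finite nonempty index set, and for each i ∈ ι let S i be a finite nonempty state space. Let Λ be a finite set of cooperation labels, and let act, pas : Λ → ι with act ℓ ≠ pas ℓ for every ℓ (each cooperation label is active in exactly one component and passive in exactly one other component). For each ℓ ∈ Λ let A ℓ : Matrix (S (act ℓ)) (S (act ℓ)) ℝ be a nonnegative active-rate matrix, let P ℓ : Matrix (S (pas ℓ)) (S (pas ℓ)) ℝ be a 0/1 matrix with exactly one entry 1 in each row, and let κ ℓ > 0. For each i let B i : Matrix (S i) (S i) ℝ be a nonnegative matrix of non-cooperating rates. Define the closed rate matrix of component i by R i = B i + ∑_{ℓ : act ℓ = i} A ℓ + ∑_{ℓ : pas ℓ = i} κ ℓ • P ℓ and its generator Q i = R i − diagonal(row sums of R i). Suppose that for each i, π i : S i → ℝ is strictly positive with π i ᵥ* (Q i) = 0, and that for every ℓ ∈ Λ the reversed-rate condition π (act ℓ) ᵥ* (A ℓ) = κ ℓ • π (act ℓ) holds. Define the joint rate matrix R on the product state space Π i, S i by: R s s' = ∑_{i} (if s' agrees with s on all coordinates except possibly i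 then B i (s i) (s' i) else 0) + ∑_{ℓ∈Λ} (if s' agrees with s on all coordinates except possibly act ℓ and pas ℓ then A ℓ (s (act ℓ)) (s' (act ℓ)) * P ℓ (s (pas ℓ)) (s' (pas ℓ)) else 0), and let Q = R − diagonal(row sums of R). Then the product measure π(s) = ∏_i π i (s i) satisfies π ᵥ* Q = 0, i.e. the invariant measure of the cooperating process is the Kronecker product of the invariant measures of the closed components. -/
open Matrix Finset

set_option linter.unusedSectionVars false


section helpers
variable {ι : Type*} [Fintype ι] [DecidableEq ι]
  {S : ι → Type*} [∀ i, Fintype (S i)] [∀ i, DecidableEq (S i)]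

lemma sum_cond_one (i : ι) (s' : ∀ j, S j) (g : (∀ j, S j) → ℝ) :
    (∑ s : ∀ j, S j, if ∀ j, j ≠ i → s j = s' j then g s else 0)
      = ∑ x : S i, g (Function.update s' i x) := by
  have key : ∀ s : ∀ j, S j, (∀ j, j ≠ i → s j = s' j) →
      Function.update s' i (s i) = s := by
    intro s hs; funext j
    by_cases hj : j = i
    · subst hj; simp
    · rw [Function.update_of_ne hj]; exact (hs j hj).symm
  rw [Finset.sum_ite, Finset.sum_const_zero, add_zero]
  refine Finset.sum_nbij' (fun s => s i) (fun x => Function.update s' i x) ?_ ?_ ?_ ?_ ?_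
  · intro s _; exact Finset.mem_univ _
  · intro x _; simp only [Finset.mem_filter, Finset.mem_univ, true_and]
    intro j hj; exact Function.update_of_ne hj _ _
  · intro s hs
    simp only [Finset.mem_filter, Finset.mem_univ, true_and] at hs
    exact key s hs
  · intro x _; simp
  · intro s hs
    simp only [Finset.mem_filter, Finset.mem_univ, true_and] at hs
    exact congrArg g (key s hs).symm

lemma sum_cond_two {a p : ι} (hap : a ≠ p) (s' : ∀ j, S j) (g : (∀ j, S j) → ℝ) :
    (∑ s : ∀ j, S j, if ∀ j, j ≠ a → j ≠ p → s j = s' j then g s else 0)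
      = ∑ x : S a, ∑ y : S p, g (Function.update (Function.update s' a x) p y) := by
  have key : ∀ s : ∀ j, S j, (∀ j, j ≠ a → j ≠ p → s j = s' j) →
      Function.update (Function.update s' a (s a)) p (s p) = s := by
    intro s hs; funext j
    by_cases hj2 : j = p
    · subst hj2; simp
    · rw [Function.update_of_ne hj2]
      by_cases hj1 : j = a
      · subst hj1; simp
      · rw [Function.update_of_ne hj1]; exact (hs j hj1 hj2).symm
  rw [Finset.sum_ite, Finset.sum_const_zero, add_zero, ← Finset.sum_product']
  refine Finset.sum_nbij' (fun s => (s a, s p))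
    (fun x => Function.update (Function.update s' a x.1) p x.2) ?_ ?_ ?_ ?_ ?_
  · intro s _; exact Finset.mem_univ _
  · intro x _; simp only [Finset.mem_filter, Finset.mem_univ, true_and]
    intro j hj1 hj2
    rw [Function.update_of_ne hj2, Function.update_of_ne hj1]
  · intro s hs
    simp only [Finset.mem_filter, Finset.mem_univ, true_and] at hs
    exact key s hs
  · intro x _
    rw [Function.update_of_ne hap, Function.update_self, Function.update_self]
  · intro s hs
    simp only [Finset.mem_filter, Finset.mem_univ, true_and] at hs
    exact congrArg g (key s hs).symm

omit [Fintype ι] [∀ i, DecidableEq (S i)] in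
lemma update_comp (π : ∀ i, S i → ℝ) (i : ι) (s' : ∀ j, S j) (x : S i) :
    (fun j => π j (Function.update s' i x j))
      = Function.update (fun j => π j (s' j)) i (π i x) := by
  funext j
  by_cases hj : j = i
  · subst hj; simp
  · rw [Function.update_of_ne hj, Function.update_of_ne hj]

omit [∀ i, DecidableEq (S i)] in
lemma prod_update_one (π : ∀ i, S i → ℝ) (i : ι) (s' : ∀ j, S j) (x : S i) :
    (∏ j, π j (Function.update s' i x j))
      = π i x * ∏ j ∈ Finset.univ.erase i, π j (s' j) := by
  rw [update_comp, Finset.prod_update_of_mem (Finset.mem_univ i), ← Finset.erase_eq]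

omit [∀ i, DecidableEq (S i)] in
lemma prod_update_two (π : ∀ i, S i → ℝ) {a p : ι} (hap : a ≠ p) (s' : ∀ j, S j)
    (x : S a) (y : S p) :
    (∏ j, π j (Function.update (Function.update s' a x) p y j))
      = π a x * π p y * ∏ j ∈ (Finset.univ.erase p).erase a, π j (s' j) := by
  rw [prod_update_one π p _ y, update_comp,
    Finset.prod_update_of_mem (Finset.mem_erase.mpr ⟨hap, Finset.mem_univ a⟩),
    ← Finset.erase_eq]
  ring

end helpers

/-- Theorem 1 (GRCAT), general form for `N` cooperating components indexed by `ι`.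
Each cooperation label `ℓ` is active in component `act ℓ` (rate matrix `A ℓ`)
and passive in component `pas ℓ` (0/1 matrix `P ℓ` with a unique 1 per row);
`B i` collects the non-cooperating rates of component `i`.  If each closed
component (with the constant `κ ℓ` substituted for its passive `ℓ`-transitions)
has a positive invariant measure `π i` satisfying the constant reversed-rate
conditions, then the product measure `s ↦ ∏ i, π i (s i)` is an invariant
measure of the cooperating process. -/
theorem product_form_general
    {ι : Type*} [Fintype ι] [Nonempty ι] [DecidableEq ι]
    {S : ι → Type*} [∀ i, Fintype (S i)] [∀ i, Nonempty (S i)] [∀ i, DecidableEq (S i)]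
    {Λ : Type*} [Fintype Λ]
    (act pas : Λ → ι) (hap : ∀ ℓ, act ℓ ≠ pas ℓ)
    (A : ∀ ℓ, Matrix (S (act ℓ)) (S (act ℓ)) ℝ)
    (P : ∀ ℓ, Matrix (S (pas ℓ)) (S (pas ℓ)) ℝ)
    (κ : Λ → ℝ) (hκ : ∀ ℓ, 0 < κ ℓ)
    (B : ∀ i, Matrix (S i) (S i) ℝ)
    (hA : ∀ ℓ x y, 0 ≤ A ℓ x y) (hB : ∀ i x y, 0 ≤ B i x y)
    (hProw : ∀ ℓ x, ∃ y, P ℓ x y = 1 ∧ ∀ z, z ≠ y → P ℓ x z = 0)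
    (R : ∀ i, Matrix (S i) (S i) ℝ)
    (hR : ∀ i x y, R i x y = B i x y
        + (∑ ℓ : Λ, if h : act ℓ = i then
            A ℓ (cast (congrArg S h).symm x) (cast (congrArg S h).symm y) else 0)
        + (∑ ℓ : Λ, if h : pas ℓ = i then
            κ ℓ * P ℓ (cast (congrArg S h).symm x) (cast (congrArg S h).symm y) else 0))
    (π : ∀ i, S i → ℝ) (hπpos : ∀ i x, 0 < π i x)
    (hπ : ∀ i, π i ᵥ* (R i - Matrix.diagonal fun x => ∑ y, R i x y) = 0)
    (hrev : ∀ ℓ, π (act ℓ) ᵥ* A ℓ = κ ℓ • π (act ℓ))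
    (Rjoint : Matrix (∀ i, S i) (∀ i, S i) ℝ)
    (hRjoint : ∀ s s', Rjoint s s' =
        (∑ i : ι, if ∀ j, j ≠ i → s j = s' j then B i (s i) (s' i) else 0)
      + (∑ ℓ : Λ, if ∀ j, j ≠ act ℓ → j ≠ pas ℓ → s j = s' j then
            A ℓ (s (act ℓ)) (s' (act ℓ)) * P ℓ (s (pas ℓ)) (s' (pas ℓ)) else 0)) :
    (fun s : ∀ i, S i => ∏ i, π i (s i)) ᵥ*
      (Rjoint - Matrix.diagonal fun s => ∑ s', Rjoint s s') = 0 := by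
  -- pointwise facts
  have hrev' : ∀ ℓ (u : S (act ℓ)), (∑ x, π (act ℓ) x * A ℓ x u) = κ ℓ * π (act ℓ) u := by
    intro ℓ u
    have h := congrFun (hrev ℓ) u
    simpa [vecMul, dotProduct] using h
  have hProwsum : ∀ ℓ (x : S (pas ℓ)), (∑ z, P ℓ x z) = 1 := by
    intro ℓ x
    obtain ⟨y, h1, h0⟩ := hProw ℓ x
    rw [Finset.sum_eq_single y (fun b _ hb => h0 b hb) (by simp), h1]
  have hbal0 : ∀ i (u : S i), (∑ x, π i x * R i x u) = π i u * ∑ z, R i u z := by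
    intro i u
    have h := congrFun (hπ i) u
    simp only [vecMul, dotProduct, Matrix.sub_apply, Matrix.diagonal_apply, Pi.zero_apply,
      mul_sub, Finset.sum_sub_distrib, mul_ite, mul_zero] at h
    rw [Finset.sum_ite_eq' Finset.univ u] at h
    simp only [Finset.mem_univ, if_true] at h
    linarith
  -- component balance, expanded
  have hbal : ∀ i (u : S i),
      (∑ x, π i x * B i x u)
        + (∑ ℓ, if _ : act ℓ = i then κ ℓ * π i u else 0)
        + (∑ ℓ, if h : pas ℓ = i then
            κ ℓ * ∑ x, π (pas ℓ) x * P ℓ x (cast (congrArg S h).symm u) else 0)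
      = π i u * ((∑ z, B i u z)
        + (∑ ℓ, if h : act ℓ = i then ∑ z, A ℓ (cast (congrArg S h).symm u) z else 0)
        + (∑ ℓ, if _ : pas ℓ = i then κ ℓ else 0)) := by
    intro i u
    have h0 := hbal0 i u
    have e1 : (∑ x, π i x * R i x u)
        = (∑ x, π i x * B i x u)
          + (∑ ℓ, if _ : act ℓ = i then κ ℓ * π i u else 0)
          + (∑ ℓ, if h : pas ℓ = i then
              κ ℓ * ∑ x, π (pas ℓ) x * P ℓ x (cast (congrArg S h).symm u) else 0) := by
      simp only [hR, mul_add, Finset.sum_add_distrib]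
      congr 1
      · congr 1
        simp only [Finset.mul_sum]
        rw [Finset.sum_comm]
        refine Finset.sum_congr rfl fun ℓ _ => ?_
        by_cases h : act ℓ = i
        · subst h
          simp only [dif_pos, cast_eq]
          exact hrev' ℓ u
        · simp [h]
      · simp only [Finset.mul_sum]
        rw [Finset.sum_comm]
        refine Finset.sum_congr rfl fun ℓ _ => ?_
        by_cases h : pas ℓ = i
        · subst h
          simp only [dif_pos, cast_eq, Finset.mul_sum]
          exact Finset.sum_congr rfl fun x _ => by ring
        · simp [h]
    have e2 : (∑ z, R i u z)
        = (∑ z, B i u z)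
          + (∑ ℓ, if h : act ℓ = i then ∑ z, A ℓ (cast (congrArg S h).symm u) z else 0)
          + (∑ ℓ, if _ : pas ℓ = i then κ ℓ else 0) := by
      simp only [hR, Finset.sum_add_distrib]
      congr 1
      · congr 1
        rw [Finset.sum_comm]
        refine Finset.sum_congr rfl fun ℓ _ => ?_
        by_cases h : act ℓ = i
        · subst h
          simp only [dif_pos, cast_eq]
        · simp [h]
      · rw [Finset.sum_comm]
        refine Finset.sum_congr rfl fun ℓ _ => ?_
        by_cases h : pas ℓ = i
        · subst h
          simp only [dif_pos, cast_eq, ← Finset.mul_sum, hProwsum, mul_one]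
        · simp [h]
    rw [e1, e2] at h0
    exact h0
  -- reduce the goal to a global balance equation at each joint state s'
  funext s'
  simp only [vecMul, dotProduct, Matrix.sub_apply, Matrix.diagonal_apply, Pi.zero_apply,
    mul_sub, Finset.sum_sub_distrib, mul_ite, mul_zero]
  rw [Finset.sum_ite_eq' Finset.univ s']
  simp only [Finset.mem_univ, if_true]
  rw [sub_eq_zero]
  -- joint inflow
  have hLHS : (∑ s, (∏ j, π j (s j)) * Rjoint s s')
      = (∑ i, (∏ j ∈ Finset.univ.erase i, π j (s' j)) * ∑ x, π i x * B i x (s' i))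
      + (∑ ℓ, (∏ j ∈ (Finset.univ.erase (pas ℓ)).erase (act ℓ), π j (s' j)) *
          ((κ ℓ * π (act ℓ) (s' (act ℓ))) * ∑ y, π (pas ℓ) y * P ℓ y (s' (pas ℓ)))) := by
    have step1 : (∑ s, (∏ j, π j (s j)) * Rjoint s s')
        = ∑ s : (∀ j, S j), ((∑ i, if ∀ j, j ≠ i → s j = s' j then
              (∏ j, π j (s j)) * B i (s i) (s' i) else 0)
          + (∑ ℓ, if ∀ j, j ≠ act ℓ → j ≠ pas ℓ → s j = s' j then
              (∏ j, π j (s j)) * (A ℓ (s (act ℓ)) (s' (act ℓ)) * P ℓ (s (pas ℓ)) (s' (pas ℓ)))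
              else 0)) := by
      refine Finset.sum_congr rfl fun s _ => ?_
      rw [hRjoint, mul_add, Finset.mul_sum, Finset.mul_sum]
      simp only [mul_ite, mul_zero]
    rw [step1, Finset.sum_add_distrib]
    congr 1
    · rw [Finset.sum_comm]
      refine Finset.sum_congr rfl fun i _ => ?_
      rw [sum_cond_one i s' (fun s => (∏ j, π j (s j)) * B i (s i) (s' i))]
      simp only [Function.update_self, prod_update_one]
      rw [Finset.mul_sum]
      exact Finset.sum_congr rfl fun x _ => by ring
    · rw [Finset.sum_comm]
      refine Finset.sum_congr rfl fun ℓ _ => ?_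
      rw [sum_cond_two (hap ℓ) s' (fun s => (∏ j, π j (s j)) *
        (A ℓ (s (act ℓ)) (s' (act ℓ)) * P ℓ (s (pas ℓ)) (s' (pas ℓ))))]
      simp only [Function.update_self, Function.update_of_ne (hap ℓ), prod_update_two π (hap ℓ)]
      rw [← hrev' ℓ (s' (act ℓ)), Finset.sum_mul_sum, Finset.mul_sum]
      refine Finset.sum_congr rfl fun x _ => ?_
      rw [Finset.mul_sum]
      refine Finset.sum_congr rfl fun y _ => ?_
      ring
  -- joint outflow
  have hRHS : (∑ t, Rjoint s' t)
      = (∑ i, ∑ x, B i (s' i) x) + (∑ ℓ, ∑ x, A ℓ (s' (act ℓ)) x) := by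
    have flip1 : ∀ (i : ι) (t : ∀ j, S j),
        (∀ j, j ≠ i → s' j = t j) ↔ (∀ j, j ≠ i → t j = s' j) :=
      fun i t => ⟨fun h j hj => (h j hj).symm, fun h j hj => (h j hj).symm⟩
    have flip2 : ∀ (a p : ι) (t : ∀ j, S j),
        (∀ j, j ≠ a → j ≠ p → s' j = t j) ↔ (∀ j, j ≠ a → j ≠ p → t j = s' j) :=
      fun a p t => ⟨fun h j h1 h2 => (h j h1 h2).symm, fun h j h1 h2 => (h j h1 h2).symm⟩
    have step1 : (∑ t, Rjoint s' t)
        = ∑ t : (∀ j, S j), ((∑ i, if ∀ j, j ≠ i → t j = s' j then B i (s' i) (t i) else 0)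
          + (∑ ℓ, if ∀ j, j ≠ act ℓ → j ≠ pas ℓ → t j = s' j then
              A ℓ (s' (act ℓ)) (t (act ℓ)) * P ℓ (s' (pas ℓ)) (t (pas ℓ)) else 0)) := by
      refine Finset.sum_congr rfl fun t _ => ?_
      rw [hRjoint]
      congr 1
      · exact Finset.sum_congr rfl fun i _ => if_congr (flip1 i t) rfl rfl
      · exact Finset.sum_congr rfl fun ℓ _ => if_congr (flip2 (act ℓ) (pas ℓ) t) rfl rfl
    rw [step1, Finset.sum_add_distrib]
    congr 1
    · rw [Finset.sum_comm]
      refine Finset.sum_congr rfl fun i _ => ?_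
      rw [sum_cond_one i s' (fun t => B i (s' i) (t i))]
      simp only [Function.update_self]
    · rw [Finset.sum_comm]
      refine Finset.sum_congr rfl fun ℓ _ => ?_
      rw [sum_cond_two (hap ℓ) s'
        (fun t => A ℓ (s' (act ℓ)) (t (act ℓ)) * P ℓ (s' (pas ℓ)) (t (pas ℓ)))]
      simp only [Function.update_self, Function.update_of_ne (hap ℓ)]
      rw [← Finset.sum_mul_sum]
      simp [hProwsum]
  -- summed component balance
  have hE : (∑ i, (∏ j ∈ Finset.univ.erase i, π j (s' j)) *
        ((∑ x, π i x * B i x (s' i))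
          + (∑ ℓ, if _ : act ℓ = i then κ ℓ * π i (s' i) else 0)
          + (∑ ℓ, if h : pas ℓ = i then
              κ ℓ * ∑ x, π (pas ℓ) x * P ℓ x (cast (congrArg S h).symm (s' i)) else 0)))
      = ∑ i, (∏ j ∈ Finset.univ.erase i, π j (s' j)) *
        (π i (s' i) * ((∑ z, B i (s' i) z)
          + (∑ ℓ, if h : act ℓ = i then ∑ z, A ℓ (cast (congrArg S h).symm (s' i)) z else 0)
          + (∑ ℓ, if _ : pas ℓ = i then κ ℓ else 0))) :=
    Finset.sum_congr rfl fun i _ => by rw [hbal i (s' i)]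
  -- transform the left side of hE
  have hEL : (∑ i, (∏ j ∈ Finset.univ.erase i, π j (s' j)) *
        ((∑ x, π i x * B i x (s' i))
          + (∑ ℓ, if _ : act ℓ = i then κ ℓ * π i (s' i) else 0)
          + (∑ ℓ, if h : pas ℓ = i then
              κ ℓ * ∑ x, π (pas ℓ) x * P ℓ x (cast (congrArg S h).symm (s' i)) else 0)))
      = (∑ i, (∏ j ∈ Finset.univ.erase i, π j (s' j)) * ∑ x, π i x * B i x (s' i))
        + (∑ ℓ, κ ℓ * ∏ j, π j (s' j))
        + (∑ ℓ, (∏ j ∈ (Finset.univ.erase (pas ℓ)).erase (act ℓ), π j (s' j)) *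
            ((κ ℓ * π (act ℓ) (s' (act ℓ))) * ∑ y, π (pas ℓ) y * P ℓ y (s' (pas ℓ)))) := by
    simp only [mul_add, Finset.sum_add_distrib]
    congr 1
    · congr 1
      simp only [Finset.mul_sum, mul_dite, mul_zero]
      rw [Finset.sum_comm]
      refine Finset.sum_congr rfl fun ℓ _ => ?_
      rw [Finset.sum_dite_eq]
      simp only [Finset.mem_univ, if_true]
      rw [← Finset.mul_prod_erase Finset.univ (fun j => π j (s' j)) (Finset.mem_univ (act ℓ))]
      ring
    · simp only [Finset.mul_sum, mul_dite, mul_zero]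
      rw [Finset.sum_comm]
      refine Finset.sum_congr rfl fun ℓ _ => ?_
      rw [Finset.sum_dite_eq]
      simp only [Finset.mem_univ, if_true, cast_eq]
      rw [← Finset.mul_prod_erase (Finset.univ.erase (pas ℓ)) (fun j => π j (s' j))
        (Finset.mem_erase.mpr ⟨hap ℓ, Finset.mem_univ (act ℓ)⟩)]
      exact Finset.sum_congr rfl fun x _ => by ring
  -- transform the right side of hE
  have hER : (∑ i, (∏ j ∈ Finset.univ.erase i, π j (s' j)) *
        (π i (s' i) * ((∑ z, B i (s' i) z)
          + (∑ ℓ, if h : act ℓ = i then ∑ z, A ℓ (cast (congrArg S h).symm (s' i)) z else 0)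
          + (∑ ℓ, if _ : pas ℓ = i then κ ℓ else 0))))
      = (∑ i, (∏ j, π j (s' j)) * ∑ x, B i (s' i) x)
        + (∑ ℓ, (∏ j, π j (s' j)) * ∑ x, A ℓ (s' (act ℓ)) x)
        + (∑ ℓ, κ ℓ * ∏ j, π j (s' j)) := by
    have hPi : ∀ i, (∏ j ∈ Finset.univ.erase i, π j (s' j)) * π i (s' i)
        = ∏ j, π j (s' j) := by
      intro i
      rw [mul_comm, Finset.mul_prod_erase Finset.univ (fun j => π j (s' j)) (Finset.mem_univ i)]
    have step : ∀ i, (∏ j ∈ Finset.univ.erase i, π j (s' j)) *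
        (π i (s' i) * ((∑ z, B i (s' i) z)
          + (∑ ℓ, if h : act ℓ = i then ∑ z, A ℓ (cast (congrArg S h).symm (s' i)) z else 0)
          + (∑ ℓ, if _ : pas ℓ = i then κ ℓ else 0)))
        = (∏ j, π j (s' j)) * ((∑ z, B i (s' i) z)
          + (∑ ℓ, if h : act ℓ = i then ∑ z, A ℓ (cast (congrArg S h).symm (s' i)) z else 0)
          + (∑ ℓ, if _ : pas ℓ = i then κ ℓ else 0)) := by
      intro i
      rw [← mul_assoc, hPi i]
    rw [Finset.sum_congr rfl fun i _ => step i]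
    simp only [mul_add, Finset.sum_add_distrib]
    congr 1
    · congr 1
      simp only [Finset.mul_sum, mul_dite, mul_zero]
      rw [Finset.sum_comm]
      refine Finset.sum_congr rfl fun ℓ _ => ?_
      rw [Finset.sum_dite_eq]
      simp only [Finset.mem_univ, if_true, cast_eq]
    · simp only [Finset.mul_sum, mul_dite, mul_zero]
      rw [Finset.sum_comm]
      refine Finset.sum_congr rfl fun ℓ _ => ?_
      rw [Finset.sum_dite_eq]
      simp only [Finset.mem_univ, if_true]
      ring
  rw [hEL, hER] at hE
  rw [hLHS, hRHS, mul_add, Finset.mul_sum, Finset.mul_sum]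
  linarith
end

section
/- If M is a closed simple process of SSPA (its set of passive labels 𝒫(M) is empty), then for any label a and any positive real λ, the closure M[a←λ] is strongly bisimilar to M. -/
/-! SSPA simple processes.  A prefix `(a, r).E` is encoded as a triple
`(a, r, E)` where the rate `r : Option ℝ` is `some μ` for a real rate `μ` and
`none` for the label-indexed variable `x_a`.  Identifiers `D` come with
defining equations given by an environment `defs : Idf → Proc Act Idf`. -/

inductive Proc (Act : Type) (Idf : Type) : Type where
  | nil : Proc Act Idf
  | idf : Idf → Proc Act Idf
  | choice : List (Act × Option ℝ × Proc Act Idf) → Proc Act Idf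
  | close : Proc Act Idf → Act → ℝ → Proc Act Idf

/-- The labelled transition relation of SSPA simple processes: the smallest
relation closed under the prefix/choice rule, the identifier rule, and the
closure rules (closure replaces the variable `x_a` by `λ` on passive
`a`-transitions, leaves other transitions unchanged, and propagates to the
derivative). -/
inductive Step {Act Idf : Type} (defs : Idf → Proc Act Idf) :
    Proc Act Idf → Act × Option ℝ → Proc Act Idf → Prop where
  | choice {bs : List (Act × Option ℝ × Proc Act Idf)} {a r E}
      (h : (a, r, E) ∈ bs) : Step defs (.choice bs) (a, r) E
  | idf {D ℓ E'} (h : Step defs (defs D) ℓ E') : Step defs (.idf D) ℓ E'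
  | closePas {M a lam M'} (h : Step defs M (a, none) M') :
      Step defs (.close M a lam) (a, some lam) (.close M' a lam)
  | closeAct {M a lam mu M'} (h : Step defs M (a, some mu) M') :
      Step defs (.close M a lam) (a, some mu) (.close M' a lam)
  | closeOther {M a lam b r M'} (hb : b ≠ a) (h : Step defs M (b, r) M') :
      Step defs (.close M a lam) (b, r) (.close M' a lam)

/-- `PassiveMem defs a M` means `a ∈ 𝒫(M)`, the recursively defined set of
passive labels of `M`: `𝒫(0) = ∅`; `𝒫(D) = 𝒫(M)` when `D ≝ M`;
`𝒫(∑ (aᵢ,rᵢ).Eᵢ) = {aᵢ : rᵢ is a variable} ∪ ⋃ᵢ 𝒫(Eᵢ)`;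
`𝒫(M[a←λ]) = 𝒫(M) \ {a}`. -/
inductive PassiveMem {Act Idf : Type} (defs : Idf → Proc Act Idf) :
    Act → Proc Act Idf → Prop where
  | choiceVar {bs : List (Act × Option ℝ × Proc Act Idf)} {a E}
      (h : (a, (none : Option ℝ), E) ∈ bs) : PassiveMem defs a (.choice bs)
  | choiceCont {bs : List (Act × Option ℝ × Proc Act Idf)} {a b r E}
      (h : (b, r, E) ∈ bs) (hE : PassiveMem defs a E) : PassiveMem defs a (.choice bs)
  | idf {D a} (h : PassiveMem defs a (defs D)) : PassiveMem defs a (.idf D)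
  | close {M a b lam} (h : PassiveMem defs b M) (hne : b ≠ a) :
      PassiveMem defs b (.close M a lam)

/-- A simple process is closed if its set of passive labels is empty. -/
def Closed {Act Idf : Type} (defs : Idf → Proc Act Idf) (M : Proc Act Idf) : Prop :=
  ∀ a, ¬ PassiveMem defs a M

/-- A strong bisimulation: a symmetric relation such that related processes can
match each other's transitions, with derivatives again related. -/
def IsBisimulation {Act Idf : Type} (defs : Idf → Proc Act Idf)
    (R : Proc Act Idf → Proc Act Idf → Prop) : Prop :=
  Symmetric R ∧
    ∀ M₁ M₂, R M₁ M₂ → ∀ ℓ M₁', Step defs M₁ ℓ M₁' →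
      ∃ M₂', Step defs M₂ ℓ M₂' ∧ R M₁' M₂'

/-- Strong bisimilarity: the largest strong bisimulation. -/
def Bisimilar {Act Idf : Type} (defs : Idf → Proc Act Idf)
    (M₁ M₂ : Proc Act Idf) : Prop :=
  ∃ R, IsBisimulation defs R ∧ R M₁ M₂

lemma passive_of_step_none {Act Idf : Type} {defs : Idf → Proc Act Idf}
    {M M' : Proc Act Idf} {b : Act} (h : Step defs M (b, none) M') :
    PassiveMem defs b M := by
  generalize hl : (b, (none : Option ℝ)) = ℓ at h
  induction h with
  | choice hmem => cases hl; exact .choiceVar hmem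
  | idf h ih => exact .idf (ih hl)
  | closePas h ih => cases hl
  | closeAct h ih => cases hl
  | closeOther hb h ih =>
      cases hl; exact .close (ih rfl) hb

lemma passive_step {Act Idf : Type} {defs : Idf → Proc Act Idf}
    {M M' : Proc Act Idf} {ℓ} (h : Step defs M ℓ M') {c : Act}
    (hc : PassiveMem defs c M') : PassiveMem defs c M := by
  induction h with
  | choice hmem => exact .choiceCont hmem hc
  | idf h ih => exact .idf (ih hc)
  | closePas h ih =>
      cases hc with | close h' hne => exact .close (ih h') hne
  | closeAct h ih =>
      cases hc with | close h' hne => exact .close (ih h') hne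
  | closeOther hb h ih =>
      cases hc with | close h' hne => exact .close (ih h') hne

lemma closed_step {Act Idf : Type} {defs : Idf → Proc Act Idf}
    {M M' : Proc Act Idf} {ℓ} (h : Step defs M ℓ M') (hM : Closed defs M) :
    Closed defs M' := fun c hc => hM c (passive_step h hc)

/-- Proposition 1(1): if `M` is a closed simple process (`𝒫(M) = ∅`) then for
any label `a` and positive real `λ`, the closure `M[a←λ]` is strongly
bisimilar to `M`. -/
theorem closure_of_closed_bisimilar {Act Idf : Type} (defs : Idf → Proc Act Idf)
    (M : Proc Act Idf) (hM : Closed defs M) (a : Act) (lam : ℝ) (hlam : 0 < lam) :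
    Bisimilar defs (Proc.close M a lam) M := by
  classical
  refine ⟨fun X Y => X = Y ∨ ∃ N, Closed defs N ∧
      ((X = .close N a lam ∧ Y = N) ∨ (Y = .close N a lam ∧ X = N)), ⟨?_, ?_⟩,
      Or.inr ⟨M, hM, Or.inl ⟨rfl, rfl⟩⟩⟩
  · rintro X Y (rfl | ⟨N, hN, (⟨rfl, rfl⟩ | ⟨rfl, rfl⟩)⟩)
    · exact Or.inl rfl
    · exact Or.inr ⟨_, hN, Or.inr ⟨rfl, rfl⟩⟩
    · exact Or.inr ⟨_, hN, Or.inl ⟨rfl, rfl⟩⟩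
  · rintro X Y (rfl | ⟨N, hN, (⟨rfl, rfl⟩ | ⟨rfl, rfl⟩)⟩) ℓ X' hstep
    · exact ⟨X', hstep, Or.inl rfl⟩
    · -- X = close N a lam, Y = N
      cases hstep with
      | closePas h => exact absurd (passive_of_step_none h) (hN a)
      | closeAct h =>
          exact ⟨_, h, Or.inr ⟨_, closed_step h hN, Or.inl ⟨rfl, rfl⟩⟩⟩
      | closeOther hb h =>
          exact ⟨_, h, Or.inr ⟨_, closed_step h hN, Or.inl ⟨rfl, rfl⟩⟩⟩
    · -- X = N, Y = close N a lam
      obtain ⟨b, r⟩ := ℓ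
      obtain (rfl | ⟨mu, rfl⟩) : r = none ∨ ∃ mu, r = some mu := by
        cases r with
        | none => exact Or.inl rfl
        | some mu => exact Or.inr ⟨mu, rfl⟩
      · exact absurd (passive_of_step_none hstep) (hN b)
      · by_cases hba : b = a
        · subst hba
          exact ⟨_, .closeAct hstep,
            Or.inr ⟨_, closed_step hstep hN, Or.inr ⟨rfl, rfl⟩⟩⟩
        · exact ⟨_, .closeOther hba hstep,
            Or.inr ⟨_, closed_step hstep hN, Or.inr ⟨rfl, rfl⟩⟩⟩
end

section
/- For any SSPA simple process M, distinct labels a ≠ b, and positive reals λ, μ, the two iterated closures M[a←λ][b←μ] and M[b←μ][a←λ] are strongly bisimilar; that is, the order of application of the closure operator on distinct labels does not matter up to strong bisimilarity. -/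
lemma closure_comm_key {Act Idf : Type} (defs : Idf → Proc Act Idf)
    {a b : Act} (hab : a ≠ b) {lam mu : ℝ} {N : Proc Act Idf} {ℓ M'}
    (h : Step defs ((N.close a lam).close b mu) ℓ M') :
    ∃ N' : Proc Act Idf, M' = (N'.close a lam).close b mu ∧
      Step defs ((N.close b mu).close a lam) ℓ ((N'.close b mu).close a lam) := by
  cases h with
  | closePas h =>
      cases h with
      | closeOther hb h =>
          exact ⟨_, rfl, .closeOther hab.symm (.closePas h)⟩
  | closeAct h =>
      cases h with
      | closePas h => exact absurd rfl hab
      | closeAct h => exact absurd rfl hab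
      | closeOther hb h =>
          exact ⟨_, rfl, .closeOther hab.symm (.closeAct h)⟩
  | closeOther hb h =>
      cases h with
      | closePas h => exact ⟨_, rfl, .closePas (.closeOther hb h)⟩
      | closeAct h => exact ⟨_, rfl, .closeAct (.closeOther hb h)⟩
      | closeOther hb' h =>
          exact ⟨_, rfl, .closeOther hb' (.closeOther hb h)⟩

/-- Proposition 1(2): the order of application of the closure operator on
distinct labels does not matter, up to strong bisimilarity:
`M[a←λ][b←μ] ≅ M[b←μ][a←λ]`. -/
theorem closure_comm_bisimilar {Act Idf : Type} (defs : Idf → Proc Act Idf)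
    (M : Proc Act Idf) (a b : Act) (hab : a ≠ b)
    (lam mu : ℝ) (hlam : 0 < lam) (hmu : 0 < mu) :
    Bisimilar defs ((M.close a lam).close b mu) ((M.close b mu).close a lam) := by
  refine ⟨fun X Y =>
    (∃ N : Proc Act Idf, X = (N.close a lam).close b mu ∧ Y = (N.close b mu).close a lam) ∨
    (∃ N : Proc Act Idf, X = (N.close b mu).close a lam ∧ Y = (N.close a lam).close b mu),
    ⟨?_, ?_⟩, Or.inl ⟨M, rfl, rfl⟩⟩
  · rintro X Y (⟨N, rfl, rfl⟩ | ⟨N, rfl, rfl⟩)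
    · exact Or.inr ⟨N, rfl, rfl⟩
    · exact Or.inl ⟨N, rfl, rfl⟩
  · rintro X Y (⟨N, rfl, rfl⟩ | ⟨N, rfl, rfl⟩) ℓ M' h
    · obtain ⟨N', rfl, h'⟩ := closure_comm_key defs hab h
      exact ⟨_, h', Or.inl ⟨N', rfl, rfl⟩⟩
    · obtain ⟨N', rfl, h'⟩ := closure_comm_key defs hab.symm h
      exact ⟨_, h', Or.inr ⟨N', rfl, rfl⟩⟩
end

section
/- The SSPA cooperation operator is commutative up to strong bisimilarity: for any finite family of simple processes M₁, …, M_N forming a valid interacting process over a cooperation set L ⊆ Act, and any permutation σ of {1, …, N}, the interacting processes ⊕_L(M₁, …, M_N) and ⊕_L(M_{σ(1)}, …, M_{σ(N)}) are strongly bisimilar. -/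
/-- `ActiveMem defs a M` means `a ∈ 𝒜(M)`, the recursively defined set of
active labels of `M`: `𝒜(0) = ∅`; `𝒜(D) = 𝒜(M)` when `D ≝ M`;
`𝒜(∑ (aᵢ,rᵢ).Eᵢ) = {aᵢ : rᵢ ∈ ℝ⁺} ∪ ⋃ᵢ 𝒜(Eᵢ)`; `𝒜(M[a←λ]) = 𝒜(M) ∪ {a}`. -/
inductive ActiveMem {Act Idf : Type} (defs : Idf → Proc Act Idf) :
    Act → Proc Act Idf → Prop where
  | choiceReal {bs : List (Act × Option ℝ × Proc Act Idf)} {a lam E}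
      (h : (a, (some lam : Option ℝ), E) ∈ bs) : ActiveMem defs a (.choice bs)
  | choiceCont {bs : List (Act × Option ℝ × Proc Act Idf)} {a b r E}
      (h : (b, r, E) ∈ bs) (hE : ActiveMem defs a E) : ActiveMem defs a (.choice bs)
  | idf {D a} (h : ActiveMem defs a (defs D)) : ActiveMem defs a (.idf D)
  | closeSelf {M a lam} : ActiveMem defs a (.close M a lam)
  | closeOther {M a b lam} (h : ActiveMem defs b M) : ActiveMem defs b (.close M a lam)

/-- The semantics of the n-ary cooperation operator `⊕_L(M₁, …, M_N)`, whose
state is the tuple of component states: a transition on a label outside `L`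
moves a single component; a transition on a label in `L` is a strictly
pairwise cooperation between one active component (real rate `λ`) and one
passive component (variable `x_a`), and carries the active rate `λ`. -/
inductive CoopStep {Act Idf : Type} {N : ℕ} (defs : Idf → Proc Act Idf) (L : Set Act) :
    (Fin N → Proc Act Idf) → Act × Option ℝ → (Fin N → Proc Act Idf) → Prop where
  | solo {f : Fin N → Proc Act Idf} {i a r M'}
      (ha : a ∉ L) (h : Step defs (f i) (a, r) M') :
      CoopStep defs L f (a, r) (Function.update f i M')
  | coop {f : Fin N → Proc Act Idf} {i k a lam Mi' Mk'}
      (ha : a ∈ L) (hik : i ≠ k)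
      (hi : Step defs (f i) (a, some lam) Mi') (hk : Step defs (f k) (a, none) Mk') :
      CoopStep defs L f (a, some lam) (Function.update (Function.update f i Mi') k Mk')

/-- A strong bisimulation between states of the n-ary cooperation. -/
def IsCoopBisimulation {Act Idf : Type} {N : ℕ} (defs : Idf → Proc Act Idf) (L : Set Act)
    (R : (Fin N → Proc Act Idf) → (Fin N → Proc Act Idf) → Prop) : Prop :=
  Symmetric R ∧
    ∀ f₁ f₂, R f₁ f₂ → ∀ ℓ f₁', CoopStep defs L f₁ ℓ f₁' →
      ∃ f₂', CoopStep defs L f₂ ℓ f₂' ∧ R f₁' f₂'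

/-- Strong bisimilarity of states of the n-ary cooperation. -/
def CoopBisimilar {Act Idf : Type} {N : ℕ} (defs : Idf → Proc Act Idf) (L : Set Act)
    (f₁ f₂ : Fin N → Proc Act Idf) : Prop :=
  ∃ R, IsCoopBisimulation defs L R ∧ R f₁ f₂

namespace CoopStep

variable {Act Idf : Type} {N : ℕ} {defs : Idf → Proc Act Idf} {L : Set Act}

theorem comp_perm (σ : Equiv.Perm (Fin N)) {f f' : Fin N → Proc Act Idf} {ℓ : Act × Option ℝ}
    (h : CoopStep defs L f ℓ f') : CoopStep defs L (f ∘ σ) ℓ (f' ∘ σ) := by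
  cases h with
  | solo ha hstep =>
    rw [Function.update_comp_equiv]
    exact solo ha (by simpa using hstep)
  | coop ha hik hi hk =>
    rw [Function.update_comp_equiv, Function.update_comp_equiv]
    exact coop ha (σ.symm.injective.ne hik) (by simpa using hi) (by simpa using hk)

theorem of_comp_perm (σ : Equiv.Perm (Fin N)) {f f' : Fin N → Proc Act Idf}
    {ℓ : Act × Option ℝ} (h : CoopStep defs L (f ∘ σ) ℓ f') :
    CoopStep defs L f ℓ (f' ∘ σ.symm) := by
  simpa [Function.comp_assoc] using h.comp_perm σ.symm

end CoopStep

theorem isCoopBisimulation_comp_perm {Act Idf : Type} {N : ℕ} (defs : Idf → Proc Act Idf)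
    (L : Set Act) (σ : Equiv.Perm (Fin N)) :
    IsCoopBisimulation defs L (fun f g => g = f ∘ σ ∨ f = g ∘ σ) := by
  refine ⟨fun f g h => h.symm, ?_⟩
  rintro f g (rfl | rfl) ℓ f' hstep
  · exact ⟨f' ∘ σ, hstep.comp_perm σ, Or.inl rfl⟩
  · exact ⟨f' ∘ σ.symm, hstep.of_comp_perm σ, Or.inr (by ext; simp)⟩

theorem coop_comm_general {Act Idf : Type} {N : ℕ} (defs : Idf → Proc Act Idf) (L : Set Act)
    (M : Fin N → Proc Act Idf)
    (σ : Equiv.Perm (Fin N)) :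
    CoopBisimilar defs L M (M ∘ σ) :=
  ⟨_, isCoopBisimulation_comp_perm defs L σ, Or.inl rfl⟩

/-- Commutativity of the SSPA cooperation operator: for any valid interacting
process `⊕_L(M₁, …, M_N)` (no label of `L` is active in two distinct
components, nor passive in two distinct components) and any permutation `σ`,
the processes `⊕_L(M₁, …, M_N)` and `⊕_L(M_{σ(1)}, …, M_{σ(N)})` are strongly
bisimilar. -/
theorem coop_comm {Act Idf : Type} {N : ℕ} (defs : Idf → Proc Act Idf) (L : Set Act)
    (M : Fin N → Proc Act Idf)
    (hact : ∀ i j, i ≠ j → ∀ a ∈ L, ActiveMem defs a (M i) → ActiveMem defs a (M j) → False)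
    (hpas : ∀ i j, i ≠ j → ∀ a ∈ L, PassiveMem defs a (M i) → PassiveMem defs a (M j) → False)
    (σ : Equiv.Perm (Fin N)) :
    CoopBisimilar defs L M (M ∘ σ) :=
  coop_comm_general defs L M σ
end

section
/- The SSPA cooperation operator is not associative up to strong bisimilarity: taking M₁ = (a,λ).0 (λ a positive real), M₂ = M₃ = (a,x_a).0, and L = {a}, the nested interacting process M₂ ⊕_L M₃ has no transitions, hence M₁ ⊕_L (M₂ ⊕_L M₃) ≅ 0, whereas (M₁ ⊕_L M₂) ⊕_L M₃ has an (a,λ)-transition and is therefore not strongly bisimilar to 0; consequently M₁ ⊕_L (M₂ ⊕_L M₃) is not strongly bisimilar to (M₁ ⊕_L M₂) ⊕_L M₃. -/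
/-- Interacting processes with (possibly nested) binary cooperation
`C₁ ⊕_L C₂`. -/
inductive CProc (Act : Type) (Idf : Type) : Type where
  | simple : Proc Act Idf → CProc Act Idf
  | coop : Set Act → CProc Act Idf → CProc Act Idf → CProc Act Idf

/-- Semantics of binary (nested) cooperation: a component may move alone on a
label outside `L`; on a label in `L`, exactly one component moves with an
active transition (real rate `λ`) while the other moves with a passive
transition (variable `x_a`), the composite transition carrying rate `λ`.
In particular two passive `a`-transitions cannot synchronize. -/
inductive CStep {Act Idf : Type} (defs : Idf → Proc Act Idf) :
    CProc Act Idf → Act × Option ℝ → CProc Act Idf → Prop where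
  | simple {M ℓ M'} (h : Step defs M ℓ M') :
      CStep defs (.simple M) ℓ (.simple M')
  | left {L C₁ C₂ a r C₁'} (ha : a ∉ L) (h : CStep defs C₁ (a, r) C₁') :
      CStep defs (.coop L C₁ C₂) (a, r) (.coop L C₁' C₂)
  | right {L C₁ C₂ a r C₂'} (ha : a ∉ L) (h : CStep defs C₂ (a, r) C₂') :
      CStep defs (.coop L C₁ C₂) (a, r) (.coop L C₁ C₂')
  | syncL {L C₁ C₂ a lam C₁' C₂'} (ha : a ∈ L)
      (h₁ : CStep defs C₁ (a, some lam) C₁') (h₂ : CStep defs C₂ (a, none) C₂') :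
      CStep defs (.coop L C₁ C₂) (a, some lam) (.coop L C₁' C₂')
  | syncR {L C₁ C₂ a lam C₁' C₂'} (ha : a ∈ L)
      (h₁ : CStep defs C₁ (a, none) C₁') (h₂ : CStep defs C₂ (a, some lam) C₂') :
      CStep defs (.coop L C₁ C₂) (a, some lam) (.coop L C₁' C₂')

/-- A strong bisimulation between interacting processes. -/
def IsCBisimulation {Act Idf : Type} (defs : Idf → Proc Act Idf)
    (R : CProc Act Idf → CProc Act Idf → Prop) : Prop :=
  Symmetric R ∧
    ∀ C₁ C₂, R C₁ C₂ → ∀ ℓ C₁', CStep defs C₁ ℓ C₁' →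
      ∃ C₂', CStep defs C₂ ℓ C₂' ∧ R C₁' C₂'

/-- Strong bisimilarity of interacting processes. -/
def CBisimilar {Act Idf : Type} (defs : Idf → Proc Act Idf)
    (C₁ C₂ : CProc Act Idf) : Prop :=
  ∃ R, IsCBisimulation defs R ∧ R C₁ C₂

section Aux

variable {Act Idf : Type} (defs : Idf → Proc Act Idf)

lemma pas_inv {a : Act} {ℓ E'}
    (h : Step defs (.choice [(a, (none : Option ℝ), Proc.nil)]) ℓ E') :
    ℓ = (a, none) := by
  cases h with
  | choice h => simp_all

lemma act_inv {a : Act} {lam : ℝ} {ℓ E'}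
    (h : Step defs (.choice [(a, some lam, Proc.nil)]) ℓ E') :
    ℓ = (a, some lam) := by
  cases h with
  | choice h => simp_all

lemma noStep_PP {a : Act} : ∀ ℓ C', ¬ CStep defs
    (.coop {a} (.simple (.choice [(a, (none : Option ℝ), Proc.nil)]))
               (.simple (.choice [(a, (none : Option ℝ), Proc.nil)]))) ℓ C' := by
  intro ℓ C' h
  cases h with
  | left ha h =>
      cases h with
      | simple h =>
          have := pas_inv defs h
          simp only [Prod.mk.injEq] at this
          exact ha (by simp [this.1])
  | right ha h =>
      cases h with
      | simple h =>
          have := pas_inv defs h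
          simp only [Prod.mk.injEq] at this
          exact ha (by simp [this.1])
  | syncL ha h₁ h₂ =>
      cases h₁ with | simple h => simpa using (pas_inv defs h)
  | syncR ha h₁ h₂ =>
      cases h₂ with | simple h => simpa using (pas_inv defs h)

lemma noStep_nil : ∀ ℓ C', ¬ CStep defs (.simple (Proc.nil : Proc Act Idf)) ℓ C' := by
  intro ℓ C' h
  cases h with
  | simple h => cases h

lemma noStep_A {a : Act} {lam : ℝ} : ∀ ℓ C', ¬ CStep defs
    (.coop {a} (.simple (.choice [(a, some lam, Proc.nil)]))
      (.coop {a} (.simple (.choice [(a, (none : Option ℝ), Proc.nil)]))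
                 (.simple (.choice [(a, (none : Option ℝ), Proc.nil)])))) ℓ C' := by
  intro ℓ C' h
  cases h with
  | left ha h =>
      cases h with
      | simple h =>
          have := act_inv defs h
          simp only [Prod.mk.injEq] at this
          exact ha (by simp [this.1])
  | right ha h => exact noStep_PP defs _ _ h
  | syncL ha h₁ h₂ => exact noStep_PP defs _ _ h₂
  | syncR ha h₁ h₂ =>
      cases h₁ with | simple h => simpa using (act_inv defs h)

end Aux

/-- The SSPA cooperation operator is not associative up to strong bisimilarity.
With `M₁ = (a,λ).0`, `M₂ = M₃ = (a,x_a).0` and `L = {a}`: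
the nested process `M₂ ⊕_L M₃` has no transitions, hence
`M₁ ⊕_L (M₂ ⊕_L M₃) ≅ 0`, whereas `(M₁ ⊕_L M₂) ⊕_L M₃` has an
`(a,λ)`-transition and therefore is not strongly bisimilar to `0`;
consequently the two groupings are not strongly bisimilar. -/
theorem coop_not_assoc {Act Idf : Type} (defs : Idf → Proc Act Idf)
    (a : Act) (lam : ℝ) (hlam : 0 < lam) :
    (∀ ℓ C', ¬ CStep defs
        (.coop {a} (.simple (.choice [(a, (none : Option ℝ), Proc.nil)]))
                   (.simple (.choice [(a, (none : Option ℝ), Proc.nil)]))) ℓ C') ∧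
    CBisimilar defs
      (.coop {a} (.simple (.choice [(a, some lam, Proc.nil)]))
        (.coop {a} (.simple (.choice [(a, (none : Option ℝ), Proc.nil)]))
                   (.simple (.choice [(a, (none : Option ℝ), Proc.nil)]))))
      (.simple Proc.nil) ∧
    (∃ C', CStep defs
      (.coop {a} (.coop {a} (.simple (.choice [(a, some lam, Proc.nil)]))
                            (.simple (.choice [(a, (none : Option ℝ), Proc.nil)])))
                 (.simple (.choice [(a, (none : Option ℝ), Proc.nil)])))
      (a, some lam) C') ∧
    ¬ CBisimilar defs
      (.coop {a} (.coop {a} (.simple (.choice [(a, some lam, Proc.nil)]))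
                            (.simple (.choice [(a, (none : Option ℝ), Proc.nil)])))
                 (.simple (.choice [(a, (none : Option ℝ), Proc.nil)])))
      (.simple Proc.nil) ∧
    ¬ CBisimilar defs
      (.coop {a} (.simple (.choice [(a, some lam, Proc.nil)]))
        (.coop {a} (.simple (.choice [(a, (none : Option ℝ), Proc.nil)]))
                   (.simple (.choice [(a, (none : Option ℝ), Proc.nil)]))))
      (.coop {a} (.coop {a} (.simple (.choice [(a, some lam, Proc.nil)]))
                            (.simple (.choice [(a, (none : Option ℝ), Proc.nil)])))
                 (.simple (.choice [(a, (none : Option ℝ), Proc.nil)]))) := by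
  have hstep : CStep defs
      (.coop {a} (.coop {a} (.simple (.choice [(a, some lam, Proc.nil)]))
                            (.simple (.choice [(a, (none : Option ℝ), Proc.nil)])))
                 (.simple (.choice [(a, (none : Option ℝ), Proc.nil)])))
      (a, some lam)
      (.coop {a} (.coop {a} (.simple Proc.nil) (.simple Proc.nil)) (.simple Proc.nil)) := by
    exact CStep.syncL rfl
      (CStep.syncL rfl (CStep.simple (Step.choice (by simp)))
        (CStep.simple (Step.choice (by simp))))
      (CStep.simple (Step.choice (by simp)))
  refine ⟨noStep_PP defs, ?_, ⟨_, hstep⟩, ?_, ?_⟩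
  · refine ⟨fun X Y => (∀ ℓ C', ¬ CStep defs X ℓ C') ∧ (∀ ℓ C', ¬ CStep defs Y ℓ C'),
      ⟨fun X Y h => ⟨h.2, h.1⟩, fun C₁ C₂ h ℓ C₁' hs => absurd hs (h.1 ℓ C₁')⟩,
      noStep_A defs, noStep_nil defs⟩
  · rintro ⟨R, ⟨hsym, hbis⟩, hR⟩
    obtain ⟨C₂', hC₂', -⟩ := hbis _ _ hR _ _ hstep
    exact noStep_nil defs _ _ hC₂'
  · rintro ⟨R, ⟨hsym, hbis⟩, hR⟩
    obtain ⟨C₂', hC₂', -⟩ := hbis _ _ (hsym hR) _ _ hstep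
    exact noStep_A defs _ _ hC₂'
end
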